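/- arXiv:1907.03812 — 3 statements merged into one kernel-verified Lean document; each statement's English description precedes it below -/
import Mathlib

section
/- Checkerboard sign lemma: let q be even, ε_i = (-1)^⌊ip/q⌋ for p odd coprime to q, 0 < p < q. For 1 ≤ i ≤ q/2, set n_i = Σ_{j=1}^{i-1} ε_{2j} and m_i = (ε_{2i-1}-1)/2 + Σ_{k=1}^{i-1} ε_{2k-1}. Then ε_{2i-1} = (-1)^{n_i + m_i}. -/
theorem checkerboard_sign (p q : ℕ) (hp : 0 < p) (hpq : p < q)
    (hoddp : Odd p) (hevenq : Even q) (hcop : Nat.gcd p q = 1) :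
    ∀ i : ℕ, 1 ≤ i → i ≤ q / 2 →
      ((-1 : ℤ) ^ (((2 * i - 1) * p) / q) : ℤ)
        = (((-1 : ℤˣ) ^
            ((∑ j ∈ Finset.Icc 1 (i - 1), ((-1 : ℤ) ^ ((2 * j * p) / q) : ℤ))
              + ((((-1 : ℤ) ^ (((2 * i - 1) * p) / q) : ℤ) - 1) / 2
                + ∑ k ∈ Finset.Icc 1 (i - 1),
                    ((-1 : ℤ) ^ (((2 * k - 1) * p) / q) : ℤ))) : ℤˣ) : ℤ) := by
  intro i hi1 hi2
  set k : ℕ := ((2 * i - 1) * p) / q with hk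
  set N : ℤ := ∑ j ∈ Finset.Icc 1 (i - 1), ((-1 : ℤ) ^ ((2 * j * p) / q) : ℤ) with hN
  set M : ℤ := ∑ j ∈ Finset.Icc 1 (i - 1), ((-1 : ℤ) ^ (((2 * j - 1) * p) / q) : ℤ) with hM
  have hEven : Even (N + M) := by
    rw [hN, hM, ← Finset.sum_add_distrib]
    apply Finset.even_sum
    intro j _
    exact (Odd.pow (by decide)).add_odd (Odd.pow (by decide))
  have hre : N + ((((-1 : ℤ) ^ k : ℤ) - 1) / 2 + M)
      = (((-1 : ℤ) ^ k : ℤ) - 1) / 2 + (N + M) := by ring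
  rw [hre, zpow_add, Even.neg_one_zpow hEven, mul_one]
  rcases Nat.even_or_odd k with hk2 | hk2
  · rw [hk2.neg_one_pow]
    norm_num
  · rw [hk2.neg_one_pow]
    norm_num
end

section
/- Abelianization of the Fox derivative sum: let q be even, ε_i ∈ {1,-1}, and let θ : ℤ[F] → ℤ[x^{±1}, y^{±1}] be the ring map sending a ↦ x, b ↦ y. Then θ(∂w/∂b) = Σ_{i=1}^{q/2} ε_{2i-1} x^{Σ_{j=1}^{i-1} ε_{2j}} y^{(ε_{2i-1}-1)/2 + Σ_{k=1}^{i-1} ε_{2k-1}}, where w = b^{ε_1}a^{ε_2}⋯b^{ε_{q-1}}. -/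
/-!
Write `φ g = θ (of g)` and `D g = θ (d (of g))`. The product rule makes `D` a crossed
homomorphism, `D (u * v) = D u + φ u * D v`, and `φ g = x^{α(g)} y^{β(g)}` where `α`, `β` are the
exponent sums of `a` and `b` in `g`. Hence `D` vanishes on powers of `a`, while `D b = 1` and
`D b⁻¹ = -y⁻¹`, i.e. `D (b^δ) = δ y^{(δ - 1)/2}` for `δ = ±1`. Appending `a^{ε_q}` to `w` does
not change `D`, and each step `w_{2n+2} = w_{2n} b^{ε_{2n+1}} a^{ε_{2n+2}}` adds exactly the term
`φ (w_{2n}) D (b^{ε_{2n+1}})`, the `(n+1)`-st summand of the formula.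
-/

open AddMonoidAlgebra (single)

section CrossedHom

variable {G R : Type*} [Group G] [Ring R]

def IsCrossedHom (φ : G →* R) (D : G → R) : Prop :=
  ∀ u v, D (u * v) = D u + φ u * D v

namespace IsCrossedHom

variable {φ : G →* R} {D : G → R}

theorem map_one (hD : IsCrossedHom φ D) : D 1 = 0 := by
  simpa using hD 1 1

theorem map_inv (hD : IsCrossedHom φ D) (g : G) : D g⁻¹ = -(φ g⁻¹ * D g) := by
  refine eq_neg_of_add_eq_zero_left ?_
  rw [← hD, inv_mul_cancel, hD.map_one]

theorem map_zpow_eq_zero (hD : IsCrossedHom φ D) {g : G} (hg : D g = 0) (k : ℤ) :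
    D (g ^ k) = 0 := by
  induction k using Int.induction_on with
  | zero => rw [zpow_zero, hD.map_one]
  | succ k ih => rw [zpow_add_one, hD, ih, hg, mul_zero, add_zero]
  | pred k ih => rw [zpow_sub_one, hD, ih, hD.map_inv, hg, mul_zero, neg_zero, mul_zero, add_zero]

end IsCrossedHom

end CrossedHom

theorem isCrossedHom_comp_of {k G S : Type*} [CommSemiring k] [Group G] [Ring S]
    (θ : MonoidAlgebra k G →+* S) (d : MonoidAlgebra k G → MonoidAlgebra k G)
    (hd : ∀ u v, d (MonoidAlgebra.of k G (u * v))
      = d (MonoidAlgebra.of k G u) + MonoidAlgebra.of k G u * d (MonoidAlgebra.of k G v)) :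
    IsCrossedHom (θ.toMonoidHom.comp (MonoidAlgebra.of k G))
      (fun g => θ (d (MonoidAlgebra.of k G g))) := by
  intro u v
  dsimp only
  rw [hd, map_add, map_mul]
  rfl

def alternatingLetter (ε : ℕ → ℤ) (j : ℕ) : FreeGroup Bool :=
  (if j % 2 = 1 then FreeGroup.of false else FreeGroup.of true) ^ ε j

def alternatingWord (ε : ℕ → ℤ) (m : ℕ) : FreeGroup Bool :=
  ((List.range m).map fun j => alternatingLetter ε (j + 1)).prod

theorem alternatingWord_succ (ε : ℕ → ℤ) (m : ℕ) :
    alternatingWord ε (m + 1) = alternatingWord ε m * alternatingLetter ε (m + 1) := by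
  simp [alternatingWord, List.range_succ]

theorem alternatingWord_two_mul_add_two (ε : ℕ → ℤ) (n : ℕ) :
    alternatingWord ε (2 * n + 2) = alternatingWord ε (2 * n)
      * FreeGroup.of false ^ ε (2 * n + 1) * FreeGroup.of true ^ ε (2 * n + 2) := by
  rw [alternatingWord_succ, alternatingWord_succ, alternatingLetter, alternatingLetter,
    if_pos (by omega), if_neg (by omega)]

def exponentSums : FreeGroup Bool →* Multiplicative (ℤ × ℤ) :=
  FreeGroup.lift fun t => Multiplicative.ofAdd (if t then (1, 0) else (0, 1))

@[simp] theorem toAdd_exponentSums_of_true_zpow (k : ℤ) :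
    (exponentSums (FreeGroup.of true ^ k)).toAdd = (k, 0) := by
  simp [exponentSums]

@[simp] theorem toAdd_exponentSums_of_false_zpow (k : ℤ) :
    (exponentSums (FreeGroup.of false ^ k)).toAdd = (0, k) := by
  simp [exponentSums]

theorem toAdd_exponentSums_alternatingWord (ε : ℕ → ℤ) (n : ℕ) :
    (exponentSums (alternatingWord ε (2 * n))).toAdd
      = (∑ j ∈ Finset.Icc 1 n, ε (2 * j), ∑ k ∈ Finset.Icc 1 n, ε (2 * k - 1)) := by
  induction n with
  | zero => rfl
  | succ n ih =>
    rw [Nat.mul_succ, alternatingWord_two_mul_add_two, map_mul exponentSums, map_mul exponentSums,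
      toAdd_mul, toAdd_mul, ih, Finset.sum_Icc_succ_top (by omega),
      Finset.sum_Icc_succ_top (by omega)]
    simp only [toAdd_exponentSums_of_true_zpow, toAdd_exponentSums_of_false_zpow, Prod.mk_add_mk,
      add_zero]
    rw [show 2 * (n + 1) = 2 * n + 2 by ring, show 2 * n + 2 - 1 = 2 * n + 1 by omega]

theorem ringHom_apply_of_eq_single_exponentSums {k : Type*} [CommSemiring k]
    (θ : MonoidAlgebra k (FreeGroup Bool) →+* AddMonoidAlgebra k (ℤ × ℤ))
    (hθa : θ (MonoidAlgebra.of k (FreeGroup Bool) (FreeGroup.of true)) = single (1, 0) 1)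
    (hθb : θ (MonoidAlgebra.of k (FreeGroup Bool) (FreeGroup.of false)) = single (0, 1) 1)
    (g : FreeGroup Bool) :
    θ (MonoidAlgebra.of k (FreeGroup Bool) g) = single (exponentSums g).toAdd 1 := by
  have : θ.toMonoidHom.comp (MonoidAlgebra.of k (FreeGroup Bool))
      = (AddMonoidAlgebra.of k (ℤ × ℤ)).comp exponentSums := by
    refine FreeGroup.ext_hom _ _ fun t => ?_
    cases t
    · simpa [exponentSums, AddMonoidAlgebra.of_apply] using hθb
    · simpa [exponentSums, AddMonoidAlgebra.of_apply] using hθa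
  simpa [AddMonoidAlgebra.of_apply] using DFunLike.congr_fun this g

namespace IsCrossedHom

variable {φ : FreeGroup Bool →* AddMonoidAlgebra ℤ (ℤ × ℤ)}
  {D : FreeGroup Bool → AddMonoidAlgebra ℤ (ℤ × ℤ)}

theorem apply_of_false_zpow (hD : IsCrossedHom φ D)
    (hφ : ∀ g, φ g = single (exponentSums g).toAdd 1) (hDb : D (FreeGroup.of false) = 1)
    {δ : ℤ} (hδ : δ = 1 ∨ δ = -1) :
    D (FreeGroup.of false ^ δ) = single (0, (δ - 1) / 2) δ := by
  rcases hδ with rfl | rfl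
  · rw [zpow_one, hDb]
    rfl
  · rw [zpow_neg_one, hD.map_inv, hφ, hDb, mul_one, ← zpow_neg_one,
      toAdd_exponentSums_of_false_zpow, ← AddMonoidAlgebra.single_neg]
    rfl

theorem apply_alternatingWord_two_mul (hD : IsCrossedHom φ D)
    (hφ : ∀ g, φ g = single (exponentSums g).toAdd 1)
    (hDa : D (FreeGroup.of true) = 0) (hDb : D (FreeGroup.of false) = 1)
    (ε : ℕ → ℤ) (n : ℕ) (hε : ∀ i < n, ε (2 * i + 1) = 1 ∨ ε (2 * i + 1) = -1) :
    D (alternatingWord ε (2 * n)) = ∑ i ∈ Finset.Icc 1 n,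
      single (∑ j ∈ Finset.Icc 1 (i - 1), ε (2 * j),
        (ε (2 * i - 1) - 1) / 2 + ∑ k ∈ Finset.Icc 1 (i - 1), ε (2 * k - 1)) (ε (2 * i - 1)) := by
  induction n with
  | zero => exact hD.map_one
  | succ n ih =>
    rw [Nat.mul_succ, alternatingWord_two_mul_add_two, hD, hD, hD.map_zpow_eq_zero hDa, mul_zero,
      add_zero, ih fun i hi => hε i (by omega), hD.apply_of_false_zpow hφ hDb (hε n (by omega)),
      hφ, toAdd_exponentSums_alternatingWord, AddMonoidAlgebra.single_mul_single,
      Finset.sum_Icc_succ_top (by omega), Nat.add_sub_cancel,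
      show 2 * (n + 1) - 1 = 2 * n + 1 by omega, one_mul, Prod.mk_add_mk, add_zero,
      add_comm (∑ k ∈ Finset.Icc 1 n, ε (2 * k - 1))]

theorem apply_alternatingWord_two_mul_sub_one (hD : IsCrossedHom φ D)
    (hDa : D (FreeGroup.of true) = 0) (ε : ℕ → ℤ) (m : ℕ) :
    D (alternatingWord ε (2 * m - 1)) = D (alternatingWord ε (2 * m)) := by
  rcases m with _ | m
  · rfl
  rw [show 2 * (m + 1) - 1 = 2 * m + 1 by omega, show 2 * (m + 1) = 2 * m + 1 + 1 by ring,
    alternatingWord_succ ε (2 * m + 1), alternatingLetter, if_neg (by omega), hD,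
    hD.map_zpow_eq_zero hDa, mul_zero, add_zero]

end IsCrossedHom

theorem abelianized_fox_derivative_general
    (q : ℕ) (hq : Even q) (ε : ℕ → ℤ)
    (hε : ∀ i, 1 ≤ i → i ≤ q - 1 → ε i = 1 ∨ ε i = -1)
    (letter : ℕ → FreeGroup Bool)
    (hletter : ∀ j, letter j =
      (if j % 2 = 1 then FreeGroup.of false else FreeGroup.of true) ^ ε j)
    (d : MonoidAlgebra ℤ (FreeGroup Bool) →ₗ[ℤ] MonoidAlgebra ℤ (FreeGroup Bool))
    (hdb : d (MonoidAlgebra.of ℤ (FreeGroup Bool) (FreeGroup.of false)) = 1)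
    (hda : d (MonoidAlgebra.of ℤ (FreeGroup Bool) (FreeGroup.of true)) = 0)
    (hprod : ∀ u v : FreeGroup Bool,
      d (MonoidAlgebra.of ℤ (FreeGroup Bool) (u * v))
        = d (MonoidAlgebra.of ℤ (FreeGroup Bool) u)
          + MonoidAlgebra.of ℤ (FreeGroup Bool) u
              * d (MonoidAlgebra.of ℤ (FreeGroup Bool) v))
    (θ : MonoidAlgebra ℤ (FreeGroup Bool) →+* AddMonoidAlgebra ℤ (ℤ × ℤ))
    (hθa : θ (MonoidAlgebra.of ℤ (FreeGroup Bool) (FreeGroup.of true))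
      = AddMonoidAlgebra.single (1, 0) 1)
    (hθb : θ (MonoidAlgebra.of ℤ (FreeGroup Bool) (FreeGroup.of false))
      = AddMonoidAlgebra.single (0, 1) 1) :
    θ (d (MonoidAlgebra.of ℤ (FreeGroup Bool)
        (((List.range (q - 1)).map (fun j => letter (j + 1))).prod)))
      = ∑ i ∈ Finset.Icc 1 (q / 2),
          AddMonoidAlgebra.single
            ((∑ j ∈ Finset.Icc 1 (i - 1), ε (2 * j)),
              ((ε (2 * i - 1) - 1) / 2 + ∑ k ∈ Finset.Icc 1 (i - 1), ε (2 * k - 1)))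
            (ε (2 * i - 1)) := by
  obtain rfl : letter = alternatingLetter ε := funext hletter
  obtain ⟨m, rfl⟩ := hq.two_dvd
  have hD := isCrossedHom_comp_of θ d hprod
  have hDa : θ (d (MonoidAlgebra.of ℤ (FreeGroup Bool) (FreeGroup.of true))) = 0 := by
    rw [hda, map_zero]
  have hDb : θ (d (MonoidAlgebra.of ℤ (FreeGroup Bool) (FreeGroup.of false))) = 1 := by
    rw [hdb, map_one]
  rw [Nat.mul_div_cancel_left m two_pos]
  have hφ := ringHom_apply_of_eq_single_exponentSums θ hθa hθb
  calc _ = θ (d (MonoidAlgebra.of ℤ (FreeGroup Bool) (alternatingWord ε (2 * m - 1)))) := rfl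
    _ = _ := hD.apply_alternatingWord_two_mul_sub_one hDa ε m
    _ = _ := hD.apply_alternatingWord_two_mul hφ hDa hDb ε m
        fun i hi => hε (2 * i + 1) (by omega) (by omega)

/-- Abelianization of the Fox derivative: `θ : ℤ[F] → ℤ[x^{±1},y^{±1}]` sends
`a ↦ x`, `b ↦ y`; applied to `∂w/∂b` it yields the 2-variable Alexander sum. -/
theorem abelianized_fox_derivative
    (q : ℕ) (hq : Even q) (hq2 : 2 ≤ q) (ε : ℕ → ℤ)
    (hε : ∀ i, 1 ≤ i → i ≤ q - 1 → ε i = 1 ∨ ε i = -1)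
    (letter : ℕ → FreeGroup Bool)
    (hletter : ∀ j, letter j =
      (if j % 2 = 1 then FreeGroup.of false else FreeGroup.of true) ^ ε j)
    (d : MonoidAlgebra ℤ (FreeGroup Bool) →ₗ[ℤ] MonoidAlgebra ℤ (FreeGroup Bool))
    (hdb : d (MonoidAlgebra.of ℤ (FreeGroup Bool) (FreeGroup.of false)) = 1)
    (hda : d (MonoidAlgebra.of ℤ (FreeGroup Bool) (FreeGroup.of true)) = 0)
    (hprod : ∀ u v : FreeGroup Bool,
      d (MonoidAlgebra.of ℤ (FreeGroup Bool) (u * v))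
        = d (MonoidAlgebra.of ℤ (FreeGroup Bool) u)
          + MonoidAlgebra.of ℤ (FreeGroup Bool) u
              * d (MonoidAlgebra.of ℤ (FreeGroup Bool) v))
    (θ : MonoidAlgebra ℤ (FreeGroup Bool) →+* AddMonoidAlgebra ℤ (ℤ × ℤ))
    (hθa : θ (MonoidAlgebra.of ℤ (FreeGroup Bool) (FreeGroup.of true))
      = AddMonoidAlgebra.single (1, 0) 1)
    (hθb : θ (MonoidAlgebra.of ℤ (FreeGroup Bool) (FreeGroup.of false))
      = AddMonoidAlgebra.single (0, 1) 1) :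
    θ (d (MonoidAlgebra.of ℤ (FreeGroup Bool)
        (((List.range (q - 1)).map (fun j => letter (j + 1))).prod)))
      = ∑ i ∈ Finset.Icc 1 (q / 2),
          AddMonoidAlgebra.single
            ((∑ j ∈ Finset.Icc 1 (i - 1), ε (2 * j)),
              ((ε (2 * i - 1) - 1) / 2 + ∑ k ∈ Finset.Icc 1 (i - 1), ε (2 * k - 1)))
            (ε (2 * i - 1)) :=
  abelianized_fox_derivative_general q hq ε hε letter hletter d hdb hda hprod θ hθa hθb
end

section
/- Palindromicity of the Minkus coefficients: for p, q coprime, p odd, 0 < p < q, with ε_i = (-1)^⌊ip/q⌋ and partial sums S_k = Σ_{i=0}^{k} ε_i (ε_0 = 1), the multiset {(-1)^k at position S_k : 0 ≤ k ≤ q-1} is symmetric, i.e., the Laurent polynomial f(t) = Σ_{k=0}^{q-1} (-1)^k t^{S_k} satisfies f(t) = ± t^n f(1/t) for some integer n. -/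
/-!
For `0 < i < q` the quotients `⌊ip/q⌋` and `⌊(q-i)p/q⌋` add up to `p - 1` (as `q ∤ ip`), which is
even, so `ε_{q-i} = ε_i`. Consequently `S_{q-1-k} = S_{q-1} + 1 - S_k`, and reflecting `k ↦ q-1-k`
in `f` gives `f(t) = (-1)^(q-1) t^(S_{q-1}+1) f(t⁻¹)`.
-/

open LaurentPolynomial Finset

theorem Nat.div_add_div_add_one_of_add_eq_mul {a b q n : ℕ} (h : a + b = q * n) (ha : ¬ q ∣ a) :
    a / q + b / q + 1 = n := by
  have hq : 0 < q := Nat.pos_of_ne_zero fun hq ↦ ha (by simp_all)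
  have hdvd : q ∣ a + b := h ▸ dvd_mul_right q n
  rw [← Nat.add_div_eq_of_le_mod_add_mod (Nat.le_mod_add_mod_of_dvd_add_of_not_dvd hdvd ha) hq,
    h, Nat.mul_div_cancel_left n hq]

theorem neg_one_pow_sub_mul_div_eq {p q i : ℕ} (hodd : Odd p) (hcop : Nat.Coprime p q)
    (hi : 0 < i) (hiq : i < q) : (-1 : ℤ) ^ ((q - i) * p / q) = (-1) ^ (i * p / q) := by
  have hndvd : ¬ q ∣ i * p := fun h ↦
    absurd (Nat.le_of_dvd hi (hcop.symm.dvd_of_dvd_mul_right h)) (not_le.mpr hiq)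
  have hsum : i * p + (q - i) * p = q * p := by
    rw [← add_mul, Nat.add_sub_cancel' hiq.le, mul_comm]
  have hquot := Nat.div_add_div_add_one_of_add_eq_mul hsum hndvd
  have hparity : Even ((q - i) * p / q + i * p / q) := by
    obtain ⟨m, hm⟩ := hodd
    exact ⟨m, by omega⟩
  exact neg_one_pow_congr (Nat.even_add.mp hparity)

theorem Finset.sum_range_sub_add_sum_range_succ_of_symm {M : Type*} [AddCommMonoid M]
    {f : ℕ → M} {n : ℕ} (hf : ∀ i, 0 < i → i < n → f (n - i) = f i) :
    ∀ k < n, ∑ i ∈ range (n - k), f i + ∑ i ∈ range (k + 1), f i = ∑ i ∈ range n, f i + f 0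
  | 0, _ => by simp
  | k + 1, hk => by
    have ih := sum_range_sub_add_sum_range_succ_of_symm hf k (by omega)
    rw [show n - k = n - (k + 1) + 1 by omega, sum_range_succ, hf (k + 1) (by omega) hk] at ih
    rw [sum_range_succ _ (k + 1), ← ih]
    abel

theorem LaurentPolynomial.sum_C_mul_T_eq_C_mul_T_mul_sum_C_mul_T_neg {R : Type*} [CommSemiring R]
    {n : ℕ} {c : ℕ → R} {e : ℕ → ℤ} {s : R} {m : ℤ}
    (hc : ∀ k < n, c (n - 1 - k) = s * c k) (he : ∀ k < n, e (n - 1 - k) = m - e k) :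
    ∑ k ∈ range n, C (c k) * T (e k) = C s * T m * ∑ k ∈ range n, C (c k) * T (-e k) := by
  rw [← sum_range_reflect, mul_sum]
  refine sum_congr rfl fun k hk ↦ ?_
  have hk : k < n := mem_range.mp hk
  rw [hc k hk, he k hk, sub_eq_add_neg, T_add, map_mul]
  ring

theorem neg_one_pow_sub_one_sub {R : Type*} [Ring R] {n k : ℕ} (hk : k < n) :
    (-1 : R) ^ (n - 1 - k) = (-1) ^ (n - 1) * (-1) ^ k := by
  rw [← pow_add]
  exact neg_one_pow_congr (by rw [Nat.even_sub (by omega), Nat.even_add])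

theorem minkus_palindromic_general (p q : ℕ)
    (hodd : Odd p) (hcop : Nat.gcd p q = 1) :
    ∃ (n : ℤ) (s : ℤ), (s = 1 ∨ s = -1) ∧
      (∑ k ∈ Finset.range q,
          C ((-1 : ℤ) ^ k) *
            T (∑ i ∈ Finset.range (k + 1), ((-1 : ℤ) ^ ((i * p) / q) : ℤ)))
        = C s * T n *
          (∑ k ∈ Finset.range q,
            C ((-1 : ℤ) ^ k) *
              T (-(∑ i ∈ Finset.range (k + 1), ((-1 : ℤ) ^ ((i * p) / q) : ℤ)))) := by
  set S : ℕ → ℤ := fun k ↦ ∑ i ∈ range (k + 1), (-1 : ℤ) ^ (i * p / q)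
  have hS : ∀ k < q, S (q - 1 - k) = S (q - 1) + 1 - S k := by
    intro k hk
    have := sum_range_sub_add_sum_range_succ_of_symm (f := fun i ↦ (-1 : ℤ) ^ (i * p / q))
      (fun i hi hiq ↦ neg_one_pow_sub_mul_div_eq hodd hcop hi hiq) k hk
    simp only [S, show q - 1 - k + 1 = q - k by omega, show q - 1 + 1 = q by omega]
    simp only [zero_mul, Nat.zero_div, pow_zero] at this
    linarith
  exact ⟨S (q - 1) + 1, (-1) ^ (q - 1), neg_one_pow_eq_or ℤ (q - 1),
    sum_C_mul_T_eq_C_mul_T_mul_sum_C_mul_T_neg (fun k hk ↦ neg_one_pow_sub_one_sub hk) hS⟩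

theorem minkus_palindromic (p q : ℕ) (hp : 0 < p) (hpq : p < q)
    (hodd : Odd p) (hcop : Nat.gcd p q = 1) :
    ∃ (n : ℤ) (s : ℤ), (s = 1 ∨ s = -1) ∧
      (∑ k ∈ Finset.range q,
          C ((-1 : ℤ) ^ k) *
            T (∑ i ∈ Finset.range (k + 1), ((-1 : ℤ) ^ ((i * p) / q) : ℤ)))
        = C s * T n *
          (∑ k ∈ Finset.range q,
            C ((-1 : ℤ) ^ k) *
              T (-(∑ i ∈ Finset.range (k + 1), ((-1 : ℤ) ^ ((i * p) / q) : ℤ)))) :=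
  minkus_palindromic_general p q hodd hcop
end
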